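/- arXiv:2005.13229 — 3 statements merged into one kernel-verified Lean document; each statement's English description precedes it below -/
import Mathlib

section
/- Let μ be a measure on a measurable space α, F a measurable set with μ F < ∞, and A : ℕ → Set α a sequence of measurable sets with A n ⊆ A (n+1) and A n ⊆ F for all n. Let c be a positive extended-nonnegative real, and suppose that for every n, if μ (A n) < μ F then c ≤ μ (A (n+1) \ A n). Then for every n ∈ ℕ, min (μ (A 0) + n·c, μ F) ≤ μ (A n). (Quantitative form of the growth argument in the paper's Lemma 2: the measure of the iterated visibility sets grows linearly at rate at least c until it reaches μ(X_free).) -/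
open MeasureTheory ENNReal

/-! A sequence that grows by at least `c` at every step where it is still below `b`, and never
decreases, is bounded below by `min (a 0 + n • c) b`: while below `b` it gains `c` per step, and
once it reaches `b` it stays there. For measures, the gain of a step is the measure of the newly
added part `A (n + 1) \ A n`. -/

theorem min_add_nsmul_le_of_step {M : Type*} [AddCommMonoid M] [LinearOrder M]
    [IsOrderedAddMonoid M] {a : ℕ → M} {b c : M} (hc : 0 ≤ c) (hmono : Monotone a)
    (hstep : ∀ n, a n < b → a n + c ≤ a (n + 1)) (n : ℕ) :
    min (a 0 + n • c) b ≤ a n := by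
  induction n with
  | zero => simp
  | succ n ih =>
    rcases lt_or_ge (a n) b with hlt | hge
    · calc min (a 0 + (n + 1) • c) b
          ≤ min (a 0 + n • c + c) (b + c) := by
            rw [succ_nsmul, add_assoc]
            exact min_le_min_left _ (le_add_of_nonneg_right hc)
        _ = min (a 0 + n • c) b + c := min_add_add_right _ _ _
        _ ≤ a n + c := add_le_add_left ih c
        _ ≤ a (n + 1) := hstep n hlt
    · exact (min_le_right _ _).trans (hge.trans (hmono n.le_succ))

theorem measure_add_measure_sdiff_of_subset {α : Type*} [MeasurableSpace α] {μ : Measure α}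
    {s t : Set α} (hs : MeasurableSet s) (hst : s ⊆ t) :
    μ s + μ (t \ s) = μ t := by
  rw [measure_add_sdiff hs.nullMeasurableSet, Set.union_eq_right.mpr hst]

theorem visibility_measure_linear_growth_general {α : Type*} [MeasurableSpace α] (μ : Measure α)
    (F : Set α)
    (A : ℕ → Set α) (hAmeas : ∀ n, MeasurableSet (A n))
    (hmono : ∀ n, A n ⊆ A (n + 1))
    (c : ℝ≥0∞)
    (hgrow : ∀ n, μ (A n) < μ F → c ≤ μ (A (n + 1) \ A n)) :
    ∀ n : ℕ, min (μ (A 0) + n * c) (μ F) ≤ μ (A n) := by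
  intro n
  have hstep : ∀ n, μ (A n) < μ F → μ (A n) + c ≤ μ (A (n + 1)) := fun n hn => by
    rw [← measure_add_measure_sdiff_of_subset (hAmeas n) (hmono n)]
    exact add_le_add_right (hgrow n hn) _
  simpa only [nsmul_eq_mul] using min_add_nsmul_le_of_step (zero_le (a := c))
    (monotone_nat_of_le_succ fun n => measure_mono (hmono n)) hstep n

/-- Quantitative form of the growth argument in the paper's Lemma 2: the measure of
the iterated visibility sets grows linearly at rate at least `c` until it reaches
the measure of the free space `F`. -/
theorem visibility_measure_linear_growth {α : Type*} [MeasurableSpace α] (μ : Measure α)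
    (F : Set α) (hFmeas : MeasurableSet F) (hFfin : μ F < ⊤)
    (A : ℕ → Set α) (hAmeas : ∀ n, MeasurableSet (A n))
    (hmono : ∀ n, A n ⊆ A (n + 1)) (hsub : ∀ n, A n ⊆ F)
    (c : ℝ≥0∞) (hc : 0 < c)
    (hgrow : ∀ n, μ (A n) < μ F → c ≤ μ (A (n + 1) \ A n)) :
    ∀ n : ℕ, min (μ (A 0) + n * c) (μ F) ≤ μ (A n) :=
  visibility_measure_linear_growth_general μ F A hAmeas hmono c hgrow
end

section
/- Let μ be a measure on a measurable space α, F a measurable set with μ F < ∞, and A : ℕ → Set α a sequence of measurable sets with A n ⊆ A (n+1) and A n ⊆ F for all n. Let c be a positive extended-nonnegative real, and suppose that for every n, if μ (A n) < μ F then c ≤ μ (A (n+1) \ A n). Then every n ∈ ℕ with μ F ≤ n·c satisfies μ (A n) = μ F; in particular the sensing-restricted visibility index q = argmin{ i | μ(A i) = μ F } is at most any n with n·c ≥ μ F. (Explicit bound on the visibility index q of Eq. (10).) -/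
open MeasureTheory ENNReal

/-! As long as `A n` has not filled `F`, each step adds measure at least `c`, so after `n` steps
either `A n` has filled `F` or `μ (A n) ≥ n * c`; when `n * c ≥ μ F` the second alternative
also forces `μ (A n) = μ F`, since `A n ⊆ F`. -/

section

variable {α : Type*} [MeasurableSpace α] {μ : Measure α} {F : Set α} {A : ℕ → Set α}

theorem measure_succ_eq_of_measure_eq (hmono : ∀ n, A n ⊆ A (n + 1)) (hsub : ∀ n, A n ⊆ F)
    {n : ℕ} (h : μ (A n) = μ F) : μ (A (n + 1)) = μ F :=
  le_antisymm (measure_mono (hsub _)) (h ▸ measure_mono (hmono n))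

theorem measure_eq_or_mul_le_measure (hAmeas : ∀ n, MeasurableSet (A n))
    (hmono : ∀ n, A n ⊆ A (n + 1)) (hsub : ∀ n, A n ⊆ F) {c : ℝ≥0∞}
    (hgrow : ∀ n, μ (A n) < μ F → c ≤ μ (A (n + 1) \ A n)) (n : ℕ) :
    μ (A n) = μ F ∨ n * c ≤ μ (A n) := by
  induction n with
  | zero => simp
  | succ n ih =>
    rcases (measure_mono (μ := μ) (hsub n)).eq_or_lt with hfull | hlt
    · exact .inl (measure_succ_eq_of_measure_eq hmono hsub hfull)
    · have hbound : n * c ≤ μ (A n) := ih.resolve_left hlt.ne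
      right
      calc ((n + 1 : ℕ) : ℝ≥0∞) * c = n * c + c := by push_cast; rw [add_mul, one_mul]
        _ ≤ μ (A n) + μ (A (n + 1) \ A n) := add_le_add hbound (hgrow n hlt)
        _ = μ (A (n + 1)) := by
          rw [measure_add_sdiff (hAmeas n).nullMeasurableSet, Set.union_eq_right.2 (hmono n)]

end

theorem visibility_index_bound_general {α : Type*} [MeasurableSpace α] (μ : Measure α)
    (F : Set α)
    (A : ℕ → Set α) (hAmeas : ∀ n, MeasurableSet (A n))
    (hmono : ∀ n, A n ⊆ A (n + 1)) (hsub : ∀ n, A n ⊆ F)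
    (c : ℝ≥0∞)
    (hgrow : ∀ n, μ (A n) < μ F → c ≤ μ (A (n + 1) \ A n)) :
    (∀ n : ℕ, μ F ≤ n * c → μ (A n) = μ F) ∧
      ∀ n : ℕ, μ F ≤ n * c → sInf {i : ℕ | μ (A i) = μ F} ≤ n := by
  have hfull : ∀ n : ℕ, μ F ≤ n * c → μ (A n) = μ F := fun n hn =>
    (measure_eq_or_mul_le_measure hAmeas hmono hsub hgrow n).elim id
      fun hbound => le_antisymm (measure_mono (hsub n)) (hn.trans hbound)
  exact ⟨hfull, fun n hn => Nat.sInf_le (hfull n hn)⟩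

/-- Explicit bound on the sensing-restricted visibility index `q` of Eq. (10):
after any number `n` of steps with `n * c ≥ μ F`, the measure of the iterated
visibility set equals that of the free space; in particular the visibility index
`q = sInf { i | μ (A i) = μ F }` is at most any such `n`. -/
theorem visibility_index_bound {α : Type*} [MeasurableSpace α] (μ : Measure α)
    (F : Set α) (hFmeas : MeasurableSet F) (hFfin : μ F < ⊤)
    (A : ℕ → Set α) (hAmeas : ∀ n, MeasurableSet (A n))
    (hmono : ∀ n, A n ⊆ A (n + 1)) (hsub : ∀ n, A n ⊆ F)
    (c : ℝ≥0∞) (hc : 0 < c)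
    (hgrow : ∀ n, μ (A n) < μ F → c ≤ μ (A (n + 1) \ A n)) :
    (∀ n : ℕ, μ F ≤ n * c → μ (A n) = μ F) ∧
      ∀ n : ℕ, μ F ≤ n * c → sInf {i : ℕ | μ (A i) = μ F} ≤ n :=
  visibility_index_bound_general μ F A hAmeas hmono hsub c hgrow
end

section
/- Let (Ω, P) be a probability space, N ∈ ℕ, and X₁, …, X_N independent random variables on Ω each taking values in {0,1}. Let p be a real number with 0 ≤ p ≤ 1 such that p ≤ P(Xᵢ = 1) for every i. Then for every q ∈ ℕ, P(∑_{i=1}^{N} Xᵢ < q) ≤ T(N, p, q) = ∑_{k=0}^{q-1} (N choose k) p^k (1-p)^{N-k}. (Paper's Proposition 2: the probability that the sum A = A₁+⋯+A_N of the per-iteration progress indicators is less than q is bounded by the corresponding lower tail of a Binomial(N,p) variable B = B₁+⋯+B_N.) -/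
open MeasureTheory ProbabilityTheory

/-!
Induct on the number of variables. If `S` is the sum of the others and `Y` an independent
indicator with `r = P(Y = 1) ≥ p`, then `P(S + Y < q + 1) ≤ r P(S < q) + (1 - r) P(S < q + 1)`;
since `P(S < q) ≤ P(S < q + 1)`, this bound only grows when `r` is lowered to `p`, and Pascal's
rule for the binomial lower tail closes the induction.
-/

/-- The lower tail of the binomial distribution `Bin(N, p)` strictly below `q`. -/
noncomputable def binomialLowerTail (N : ℕ) (p : ℝ) (q : ℕ) : ℝ :=
  ∑ k ∈ Finset.range q, (N.choose k : ℝ) * p ^ k * (1 - p) ^ (N - k)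

lemma binomialLowerTail_zero (N : ℕ) (p : ℝ) : binomialLowerTail N p 0 = 0 := by
  simp [binomialLowerTail]

lemma binomialLowerTail_zero_succ (p : ℝ) (q : ℕ) : binomialLowerTail 0 p (q + 1) = 1 := by
  simp [binomialLowerTail, Finset.sum_range_succ']

lemma choose_mul_pow_mul_pow_succ_succ (N k : ℕ) (p : ℝ) :
    ((N + 1).choose (k + 1) : ℝ) * p ^ (k + 1) * (1 - p) ^ (N + 1 - (k + 1)) =
      p * ((N.choose k : ℝ) * p ^ k * (1 - p) ^ (N - k)) +
        (1 - p) * ((N.choose (k + 1) : ℝ) * p ^ (k + 1) * (1 - p) ^ (N - (k + 1))) := by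
  rw [Nat.choose_succ_succ, Nat.add_sub_add_right]
  push_cast
  rcases lt_or_ge k N with hk | hk
  · rw [show N - k = N - (k + 1) + 1 by omega]
    ring
  · rw [Nat.choose_eq_zero_of_lt (by omega : N < k + 1)]
    push_cast
    ring

lemma binomialLowerTail_succ_succ (N q : ℕ) (p : ℝ) :
    binomialLowerTail (N + 1) p (q + 1) =
      p * binomialLowerTail N p q + (1 - p) * binomialLowerTail N p (q + 1) := by
  simp only [binomialLowerTail, Finset.sum_range_succ' _ q, choose_mul_pow_mul_pow_succ_succ,
    Finset.sum_add_distrib, Finset.mul_sum, Nat.choose_zero_right, Nat.cast_one, pow_zero,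
    Nat.sub_zero, mul_add]
  ring

section

variable {Ω : Type*} [MeasurableSpace Ω] {P : Measure Ω} [IsProbabilityMeasure P]

lemma ProbabilityTheory.IndepFun.measureReal_add_lt_succ_le {S Y : Ω → ℕ}
    (hSY : IndepFun S Y P) (hY : Measurable Y) (hY01 : ∀ ω, Y ω ≤ 1) (q : ℕ) :
    P.real {ω | S ω + Y ω < q + 1} ≤
      P.real {ω | Y ω = 1} * P.real {ω | S ω < q} +
        (1 - P.real {ω | Y ω = 1}) * P.real {ω | S ω < q + 1} := by
  have hmul (s t : Set ℕ) :
      P.real (S ⁻¹' s ∩ Y ⁻¹' t) = P.real (S ⁻¹' s) * P.real (Y ⁻¹' t) := by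
    simp only [measureReal_def, ← ENNReal.toReal_mul,
      hSY.measure_inter_preimage_eq_mul s t .of_discrete .of_discrete]
  have hsplit : {ω | S ω + Y ω < q + 1} ⊆
      ({ω | S ω < q} ∩ {ω | Y ω = 1}) ∪ ({ω | S ω < q + 1} ∩ {ω | Y ω = 1}ᶜ) := by
    intro ω (hω : S ω + Y ω < q + 1)
    have := hY01 ω
    by_cases h : Y ω = 1
    · exact .inl ⟨show S ω < q by omega, h⟩
    · exact .inr ⟨show S ω < q + 1 by omega, h⟩
  calc P.real {ω | S ω + Y ω < q + 1}
      ≤ P.real ({ω | S ω < q} ∩ {ω | Y ω = 1}) +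
          P.real ({ω | S ω < q + 1} ∩ {ω | Y ω = 1}ᶜ) :=
        (measureReal_mono hsplit).trans (measureReal_union_le _ _)
    _ = P.real {ω | S ω < q} * P.real {ω | Y ω = 1} +
          P.real {ω | S ω < q + 1} * P.real {ω | Y ω = 1}ᶜ :=
        congr_arg₂ (· + ·) (hmul {m | m < q} {1}) (hmul {m | m < q + 1} {1}ᶜ)
    _ = _ := by
      rw [probReal_compl_eq_one_sub (s := {ω | Y ω = 1}) (hY (.singleton 1))]
      ring

theorem measureReal_sum_lt_le_binomialLowerTail {ι : Type*} {X : ι → Ω → ℕ}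
    (hXmeas : ∀ i, Measurable (X i)) (hX01 : ∀ i ω, X i ω ≤ 1) (hindep : iIndepFun X P)
    {p : ℝ} (hp0 : 0 ≤ p) (hplb : ∀ i, p ≤ P.real {ω | X i ω = 1})
    (s : Finset ι) (q : ℕ) :
    P.real {ω | ∑ i ∈ s, X i ω < q} ≤ binomialLowerTail s.card p q := by
  classical
  induction s using Finset.induction_on generalizing q with
  | empty =>
    cases q with
    | zero => simp [binomialLowerTail_zero]
    | succ q => simp [binomialLowerTail_zero_succ]
  | insert j s hj ih =>
    cases q with
    | zero => simp [binomialLowerTail_zero]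
    | succ q =>
      have hSY := hindep.indepFun_finsetSum_of_notMem hXmeas hj
      set r := P.real {ω | X j ω = 1}
      set a := P.real {ω | ∑ i ∈ s, X i ω < q}
      set b := P.real {ω | ∑ i ∈ s, X i ω < q + 1}
      have hpr : p ≤ r := hplb j
      have hr1 : r ≤ 1 := measureReal_le_one
      have hab : a ≤ b := measureReal_mono fun ω (hω : _ < q) => show _ < q + 1 by omega
      calc P.real {ω | ∑ i ∈ insert j s, X i ω < q + 1}
          ≤ r * a + (1 - r) * b := by
            simpa only [Finset.sum_insert hj, Finset.sum_apply, add_comm (X j _)] using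
              hSY.measureReal_add_lt_succ_le (hXmeas j) (hX01 j) q
        _ ≤ p * a + (1 - p) * b := by nlinarith
        _ ≤ p * binomialLowerTail s.card p q + (1 - p) * binomialLowerTail s.card p (q + 1) :=
            add_le_add (mul_le_mul_of_nonneg_left (ih q) hp0)
              (mul_le_mul_of_nonneg_left (ih (q + 1)) (by linarith))
        _ = binomialLowerTail (insert j s).card p (q + 1) := by
            rw [Finset.card_insert_of_notMem hj, binomialLowerTail_succ_succ]

end

theorem prob_sum_lt_le_binomialLowerTail_general
    {Ω : Type*} [MeasurableSpace Ω] (P : Measure Ω) [IsProbabilityMeasure P]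
    (N : ℕ) (X : Fin N → Ω → ℕ)
    (hXmeas : ∀ i, Measurable (X i))
    (hX01 : ∀ i ω, X i ω ≤ 1)
    (hindep : iIndepFun X P)
    (p : ℝ) (hp0 : 0 ≤ p)
    (hplb : ∀ i, ENNReal.ofReal p ≤ P {ω | X i ω = 1})
    (q : ℕ) :
    P {ω | ∑ i, X i ω < q} ≤ ENNReal.ofReal (binomialLowerTail N p q) := by
  have hplb' (i : Fin N) : p ≤ P.real {ω | X i ω = 1} :=
    (ENNReal.ofReal_le_iff_le_toReal (measure_ne_top _ _)).1 (hplb i)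
  rw [← ofReal_measureReal]
  gcongr
  simpa using
    measureReal_sum_lt_le_binomialLowerTail hXmeas hX01 hindep hp0 hplb' Finset.univ q

/-- Paper's Proposition 2: if `X₁, …, X_N` are independent `{0,1}`-valued random
variables whose success probabilities are each at least `p`, then the probability
that their sum is less than `q` is at most the lower tail of a `Binomial(N, p)`
random variable below `q`. -/
theorem prob_sum_lt_le_binomialLowerTail
    {Ω : Type*} [MeasurableSpace Ω] (P : Measure Ω) [IsProbabilityMeasure P]
    (N : ℕ) (X : Fin N → Ω → ℕ)
    (hXmeas : ∀ i, Measurable (X i))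
    (hX01 : ∀ i ω, X i ω ≤ 1)
    (hindep : iIndepFun X P)
    (p : ℝ) (hp0 : 0 ≤ p) (hp1 : p ≤ 1)
    (hplb : ∀ i, ENNReal.ofReal p ≤ P {ω | X i ω = 1})
    (q : ℕ) :
    P {ω | ∑ i, X i ω < q} ≤ ENNReal.ofReal (binomialLowerTail N p q) :=
  prob_sum_lt_le_binomialLowerTail_general P N X hXmeas hX01 hindep p hp0 hplb q
end
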